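/- Let Q ⊂ ℝⁿ be prox-regular at x̄ for v̄ ∈ N_Q(x̄) and let M be a locally minimal identifiable set (relative to Q) at x̄ for v̄. For λ, ε > 0 define U := {x + λv : x ∈ M, v ∈ N_Q(x), |x − x̄| < ε, |v − v̄| < ε}. Then for all sufficiently small λ, ε > 0 we have x̄ + λv̄ ∈ int U, and M admits the representation M = P_Q(U) locally around x̄, where P_Q(U) is the set of nearest points in Q of points of U. -/

import Mathlib

open Filter Topology Metric Set
open scoped RealInnerProductSpace

noncomputable section

/-- `ℝⁿ` with the Euclidean structure. -/
abbrev Euc (n : ℕ) : Type := EuclideanSpace ℝ (Fin n)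

section Defs

variable {H : Type*} [NormedAddCommGroup H] [InnerProductSpace ℝ H]
variable {H' : Type*} [NormedAddCommGroup H'] [InnerProductSpace ℝ H']

/-- The inclusion `M ⊆ Q` holds locally around the point `x`. -/
def LocallyIncl {α : Type*} [TopologicalSpace α] (M Q : Set α) (x : α) : Prop :=
  ∃ U ∈ 𝓝 x, M ∩ U ⊆ Q ∩ U

/-- The equality `M = Q` holds locally around the point `x`. -/
def LocallyEq {α : Type*} [TopologicalSpace α] (M Q : Set α) (x : α) : Prop :=
  ∃ U ∈ 𝓝 x, M ∩ U = Q ∩ U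

/-- The graph of a set-valued mapping. -/
def svGraph (G : H → Set H') : Set (H × H') := {p | p.2 ∈ G p.1}

/-- `G⁻¹(W)`, the preimage of a set `W` under the set-valued mapping `G`. -/
def svPreimage (G : H → Set H') (W : Set H') : Set H := {x | (G x ∩ W).Nonempty}

/-- `M` is identifiable relative to the set-valued mapping `G` at `x` for `v ∈ G x`:
the inclusion `gph G ⊆ M × H'` holds locally around `(x, v)`. -/
def IdentifiableRel (G : H → Set H') (M : Set H) (x : H) (v : H') : Prop :=
  LocallyIncl (svGraph G) (M ×ˢ (univ : Set H')) (x, v)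

/-- `M` is necessary relative to `G` at `x` for `v ∈ G x`: `x ∈ M` and the function
`y ↦ d(v, G y)`, restricted to `M`, is continuous at `x`. -/
def NecessaryRel (G : H → Set H') (M : Set H) (x : H) (v : H') : Prop :=
  x ∈ M ∧ ContinuousWithinAt (fun y => EMetric.infEdist v (G y)) M x

/-- `M` is a locally minimal identifiable set relative to `G` at `x` for `v`. -/
def LocallyMinimalIdentifiableRel (G : H → Set H') (M : Set H) (x : H) (v : H') : Prop :=
  IdentifiableRel G M x v ∧ ∀ M' : Set H, IdentifiableRel G M' x v → LocallyIncl M M' x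

/-- `M` is a locally maximal necessary set relative to `G` at `x` for `v`. -/
def LocallyMaximalNecessaryRel (G : H → Set H') (M : Set H) (x : H) (v : H') : Prop :=
  NecessaryRel G M x v ∧ ∀ M' : Set H, NecessaryRel G M' x v → LocallyIncl M' M x

/-- The proximal normal cone to `Q` at `x`. -/
def proxNormalCone (Q : Set H) (x : H) : Set H :=
  {v | x ∈ Q ∧ ∃ r > (0:ℝ), ∀ y ∈ Q, dist (x + r⁻¹ • v) x ≤ dist (x + r⁻¹ • v) y}

/-- The Fréchet normal cone to `Q` at `x`. -/
def frechetNormalCone (Q : Set H) (x : H) : Set H :=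
  {v | x ∈ Q ∧ ∀ ε > (0:ℝ), ∃ δ > (0:ℝ), ∀ y ∈ Q, dist y x < δ → ⟪v, y - x⟫ ≤ ε * ‖y - x‖}

/-- The limiting normal cone to `Q` at `x`. -/
def limitingNormalCone (Q : Set H) (x : H) : Set H :=
  {v | ∃ xs vs : ℕ → H, (∀ i, vs i ∈ frechetNormalCone Q (xs i)) ∧
        Tendsto xs atTop (𝓝 x) ∧ Tendsto vs atTop (𝓝 v)}

/-- `Q` is locally closed at `x`. -/
def LocallyClosedAt (Q : Set H) (x : H) : Prop :=
  ∃ ε > (0:ℝ), IsClosed (Q ∩ closedBall x ε)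

/-- `x` is the unique nearest point of `S` to `p`. -/
def IsUniqueNearestPt (S : Set H) (p x : H) : Prop :=
  x ∈ S ∧ ∀ y ∈ S, y ≠ x → dist p x < dist p y

/-- `Q` is prox-regular at `xb` for `vb`. -/
def ProxRegularAt (Q : Set H) (xb vb : H) : Prop :=
  LocallyClosedAt Q xb ∧ ∃ ε > (0:ℝ), ∃ r > (0:ℝ), ∀ x ∈ Q,
    ∀ v ∈ limitingNormalCone Q x, dist x xb < ε → dist v vb < ε →
      IsUniqueNearestPt (Q ∩ closedBall xb ε) (x + r⁻¹ • v) x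

/-- `Q` is Clarke regular at `x`. -/
def ClarkeRegularAt (Q : Set H) (x : H) : Prop :=
  LocallyClosedAt Q x ∧ limitingNormalCone Q x = frechetNormalCone Q x

/-- `M` is identifiable relative to the set `Q` at `xb` for `vb ∈ N_Q(xb)`:
the graph of the limiting normal cone mapping is contained in `M × H` locally
around `(xb, vb)`. -/
def IdentifiableIn (Q M : Set H) (xb vb : H) : Prop :=
  ∃ W ∈ 𝓝 (xb, vb), ∀ p : H × H, p ∈ W → p.1 ∈ Q → p.2 ∈ limitingNormalCone Q p.1 → p.1 ∈ M

/-- `M` is a locally minimal identifiable set relative to the set `Q` at `xb` for `vb`. -/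
def LocallyMinimalIdentifiableIn (Q M : Set H) (xb vb : H) : Prop :=
  IdentifiableIn Q M xb vb ∧ ∀ M' : Set H, IdentifiableIn Q M' xb vb → LocallyIncl M M' xb

/-- The (Bouligand) tangent cone to `Q` at `xb`. -/
def tangentConeB (Q : Set H) (xb : H) : Set H :=
  {w | ∃ (xs : ℕ → H) (ts : ℕ → ℝ), (∀ i, xs i ∈ Q) ∧ (∀ i, 0 < ts i) ∧
      Tendsto ts atTop (𝓝 0) ∧ Tendsto xs atTop (𝓝 xb) ∧
      Tendsto (fun i => (ts i)⁻¹ • (xs i - xb)) atTop (𝓝 w)}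

/-- The set of nearest points of `Q` to `y`. -/
def nearestPts (Q : Set H) (y : H) : Set H := {z | z ∈ Q ∧ ∀ w ∈ Q, dist y z ≤ dist y w}

/-- A tangent vector `w ∈ T_Q(xb)` is smoothly derivable. -/
def SmoothlyDerivableVec (Q : Set H) (xb w : H) : Prop :=
  ∃ ε > (0:ℝ), ∃ γ : ℝ → H, ContDiffOn ℝ 1 γ (Ico (0:ℝ) ε) ∧ γ 0 = xb ∧
    (∀ t ∈ Ico (0:ℝ) ε, γ t ∈ Q) ∧
    Tendsto (fun t => t⁻¹ • (γ t - xb)) (𝓝[>] (0:ℝ)) (𝓝 w)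

/-- `Q` is smoothly derivable at `xb`: every tangent vector is smoothly derivable. -/
def SmoothlyDerivableAt (Q : Set H) (xb : H) : Prop :=
  ∀ w ∈ tangentConeB Q xb, SmoothlyDerivableVec Q xb w

/-- The normal cone of convex analysis. -/
def convNormalCone (C : Set H) (x : H) : Set H := {v | ∀ y ∈ C, ⟪v, y - x⟫ ≤ 0}

/-- The tangent cone of convex analysis. -/
def convTangentCone (C : Set H) (x : H) : Set H :=
  closure {w | ∃ l : ℝ, 0 ≤ l ∧ ∃ y ∈ C, w = l • (y - x)}

/-- A convex polyhedron: a finite intersection of closed halfspaces. -/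
def IsPolyhedron (Q : Set H) : Prop :=
  ∃ (k : ℕ) (a : Fin k → H) (b : Fin k → ℝ), Q = {x | ∀ i, ⟪a i, x⟫ ≤ b i}

/-- The relative interior of a set: interior relative to its affine span. -/
def relInterior (S : Set H) : Set H :=
  {v | v ∈ S ∧ ∃ ε > (0:ℝ), ∀ y ∈ (affineSpan ℝ S : Set H), dist y v < ε → y ∈ S}

/-- Inner semicontinuity at `xb` of a set-valued map restricted to `S`. -/
def InnerSemicontinuousOnAt (T : H → Set H') (S : Set H) (xb : H) : Prop :=
  ∀ xs : ℕ → H, (∀ i, xs i ∈ S) → Tendsto xs atTop (𝓝 xb) →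
    ∀ w ∈ T xb, ∃ ws : ℕ → H', (∀ i, ws i ∈ T (xs i)) ∧ Tendsto ws atTop (𝓝 w)

/-- `M` is a `C²` submanifold of the ambient space around the point `xb`. -/
def IsC2SubmanifoldAround (M : Set H) (xb : H) : Prop :=
  ∃ (m : ℕ) (F : H → EuclideanSpace ℝ (Fin m)) (U : Set H), IsOpen U ∧ xb ∈ U ∧
    ContDiffOn ℝ 2 F U ∧ Function.Surjective (fderiv ℝ F xb) ∧
    M ∩ U = {x ∈ U | F x = 0}

/-- `Q` is partly smooth with respect to the manifold `M` at `xb` for `vb`. -/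
def PartlySmoothAt (Q M : Set H) (xb vb : H) : Prop :=
  ProxRegularAt Q xb vb ∧
  (Submodule.span ℝ (frechetNormalCone Q xb) : Set H) = limitingNormalCone M xb ∧
  ∃ V ∈ 𝓝 vb, InnerSemicontinuousOnAt (fun x => V ∩ limitingNormalCone Q x) M xb

/-- `ℝⁿ × ℝ` with the Euclidean (ℓ²) structure, hosting epigraphs. -/
abbrev PairL2 (H : Type*) [NormedAddCommGroup H] : Type _ := WithLp 2 (H × ℝ)

/-- Build a point of `PairL2 H` from its components. -/
def pmk (x : H) (r : ℝ) : PairL2 H := (WithLp.equiv 2 (H × ℝ)).symm (x, r)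

/-- The epigraph of an extended-real-valued function. -/
def epigraph (f : H → EReal) : Set (PairL2 H) :=
  {p | f ((WithLp.equiv 2 (H × ℝ)) p).1 ≤ (((WithLp.equiv 2 (H × ℝ)) p).2 : EReal)}

/-- The limiting subdifferential. -/
def limSubdiff (f : H → EReal) (x : H) : Set H :=
  {v | ∃ r : ℝ, f x = (r : EReal) ∧
      pmk v (-1) ∈ limitingNormalCone (epigraph f) (pmk x r)}

/-- The horizon subdifferential. -/
def horizonSubdiff (f : H → EReal) (x : H) : Set H :=
  {v | ∃ r : ℝ, f x = (r : EReal) ∧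
      pmk v 0 ∈ limitingNormalCone (epigraph f) (pmk x r)}

/-- The proximal subdifferential. -/
def proxSubdiff (f : H → EReal) (x : H) : Set H :=
  {v | ∃ r : ℝ, f x = (r : EReal) ∧
      pmk v (-1) ∈ proxNormalCone (epigraph f) (pmk x r)}

/-- A function is Clarke regular at `x` if its epigraph is Clarke regular at `(x, f x)`. -/
def ClarkeRegularFn (f : H → EReal) (x : H) : Prop :=
  ∃ r : ℝ, f x = (r : EReal) ∧ ClarkeRegularAt (epigraph f) (pmk x r)

/-- `M` is identifiable at `xb` for `vb` relative to the function `f` with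
subdifferential mapping `D`: for every sequence `(xᵢ, f xᵢ, vᵢ) → (xb, f xb, vb)`
with `vᵢ ∈ D xᵢ`, the points `xᵢ` lie in `M` for all large `i`. -/
def IdentifiableFn (f : H → EReal) (D : H → Set H) (M : Set H) (xb vb : H) : Prop :=
  ∀ xs vs : ℕ → H, Tendsto xs atTop (𝓝 xb) →
    Tendsto (fun i => f (xs i)) atTop (𝓝 (f xb)) →
    Tendsto vs atTop (𝓝 vb) → (∀ i, vs i ∈ D (xs i)) →
    ∀ᶠ i in atTop, xs i ∈ M

/-- `M` is a locally minimal identifiable set relative to `f` (with subdifferential `D`). -/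
def LocallyMinimalIdentifiableFn (f : H → EReal) (D : H → Set H) (M : Set H)
    (xb vb : H) : Prop :=
  IdentifiableFn f D M xb vb ∧ ∀ M' : Set H, IdentifiableFn f D M' xb vb → LocallyIncl M M' xb

/-- The subdifferential of convex analysis for an extended-real-valued function. -/
def convexSubdiff (f : H → EReal) (x : H) : Set H :=
  {v | ∃ r : ℝ, f x = (r : EReal) ∧ ∀ y : H, ((r + ⟪v, y - x⟫ : ℝ) : EReal) ≤ f y}

/-- Convexity for an extended-real-valued function. -/
def ERealConvexOn (f : H → EReal) : Prop :=
  ∀ x y : H, ∀ a b : ℝ, 0 ≤ a → 0 ≤ b → a + b = 1 →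
    f (a • x + b • y) ≤ (a : EReal) * f x + (b : EReal) * f y

/-- A piecewise linear-quadratic function: its domain is the union of finitely many
convex polyhedra, on each of which it agrees with a polynomial of degree at most 2. -/
def IsPiecewiseLinearQuadratic (f : H → EReal) : Prop :=
  ∃ (k : ℕ) (C : Fin k → Set H), (∀ i, IsPolyhedron (C i)) ∧
    ({x | f x ≠ ⊤} = ⋃ i, C i) ∧
    ∀ i, ∃ (B : H →ₗ[ℝ] H →ₗ[ℝ] ℝ) (l : H →ₗ[ℝ] ℝ) (c : ℝ),
      ∀ x ∈ C i, f x = ((B x x + l x + c : ℝ) : EReal)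


/-- Outer semicontinuity of a set-valued mapping (at every point). -/
def OuterSemicontinuousSV (G : H → Set H') : Prop :=
  ∀ (x : H) (v : H') (xs : ℕ → H) (vs : ℕ → H'),
    Tendsto xs atTop (𝓝 x) → Tendsto vs atTop (𝓝 v) →
    (∀ i, vs i ∈ G (xs i)) → v ∈ G x

end Defs

/-!
Prox-regularity makes `x` the unique nearest point of `Q` to `x + λ • v` for every `(x, v)` in
the graph of `N_Q` near `(x̄, v̄)` and every small `λ > 0`, so `P_Q` maps `U` back into `M`; by
minimality, every point of `M` near `x̄` carries a normal near `v̄` (the points carrying such a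
normal form an identifiable set), hence lies in `P_Q(U)`. For `x̄ + λ • v̄ ∈ int U`: nearest
points of the compact set `Q ∩ B̄_ε(x̄)` depend continuously on `z` at `z₀ = x̄ + λ • v̄`, where
`x̄` is the unique one. So for `z` near `z₀` a nearest point `p` of `Q` to `z` is near `x̄`, and
`(z - p) / λ` is a proximal, hence limiting, normal near `v̄`; identifiability puts `p` in `M`,
so `z ∈ U`.
-/

section NearestPoints

variable {H : Type*} [NormedAddCommGroup H]

theorem IsUniqueNearestPt.mem_nearestPts {S : Set H} {z x : H} (h : IsUniqueNearestPt S z x) :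
    x ∈ nearestPts S z :=
  ⟨h.1, fun y hy => (eq_or_ne y x).elim (fun hyx => hyx ▸ le_rfl) fun hyx => (h.2 y hy hyx).le⟩

theorem IsUniqueNearestPt.mono {S T : Set H} {z x : H} (h : IsUniqueNearestPt S z x)
    (hTS : T ⊆ S) (hx : x ∈ T) : IsUniqueNearestPt T z x :=
  ⟨hx, fun y hy => h.2 y (hTS hy)⟩

theorem IsUniqueNearestPt.add_smul_of_le [NormedSpace ℝ H] {S : Set H} {x v : H} {s t : ℝ}
    (h : IsUniqueNearestPt S (x + s • v) x) (ht : 0 ≤ t) (hts : t ≤ s) :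
    IsUniqueNearestPt S (x + t • v) x := by
  refine ⟨h.1, fun y hy hyx => ?_⟩
  have hfar := h.2 y hy hyx
  have hseg : dist (x + s • v) (x + t • v) = (s - t) * ‖v‖ := by
    rw [dist_add_left, dist_eq_norm, ← sub_smul, norm_smul, Real.norm_of_nonneg (sub_nonneg.2 hts)]
  have htri := dist_triangle (x + s • v) (x + t • v) y
  rw [dist_self_add_left, norm_smul, Real.norm_of_nonneg (ht.trans hts)] at hfar
  rw [dist_self_add_left, norm_smul, Real.norm_of_nonneg ht]
  nlinarith

theorem mem_closedBall_of_dist_le_dist {α : Type*} [PseudoMetricSpace α] {z x y c : α} {ε : ℝ}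
    (hy : dist z y ≤ dist z x) (hx : 2 * dist z x + dist x c ≤ ε) : y ∈ closedBall c ε := by
  have := dist_triangle4 y z x c
  rw [dist_comm y z] at this
  exact mem_closedBall.2 (by linarith)

theorem mem_nearestPts_of_mem_nearestPts_inter_closedBall {Q : Set H} {z x c : H} {ε : ℝ}
    (h : x ∈ nearestPts (Q ∩ closedBall c ε) z) (hx : 2 * dist z x + dist x c ≤ ε) :
    x ∈ nearestPts Q z := by
  refine ⟨h.1.1, fun y hy => ?_⟩
  by_contra! hyx
  exact hyx.not_ge (h.2 y ⟨hy, mem_closedBall_of_dist_le_dist hyx.le hx⟩)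

theorem nearestPts_eq_singleton_of_isUniqueNearestPt {Q : Set H} {z x c : H} {ε : ℝ}
    (h : IsUniqueNearestPt (Q ∩ closedBall c ε) z x) (hx : 2 * dist z x + dist x c ≤ ε) :
    nearestPts Q z = {x} := by
  refine Subset.antisymm (fun y hy => ?_) (singleton_subset_iff.2
    (mem_nearestPts_of_mem_nearestPts_inter_closedBall h.mem_nearestPts hx))
  by_contra hyx
  have hyS : y ∈ Q ∩ closedBall c ε := ⟨hy.1, mem_closedBall_of_dist_le_dist (hy.2 x h.1.1) hx⟩
  exact (h.2 y hyS hyx).not_ge (hy.2 x h.1.1)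

theorem nearestPts_add_smul_eq_singleton [NormedSpace ℝ H] {Q : Set H} {x v c : H} {ε s t : ℝ}
    (h : IsUniqueNearestPt (Q ∩ closedBall c ε) (x + s • v) x) (ht : 0 ≤ t) (hts : t ≤ s)
    (hsmall : 2 * t * ‖v‖ + dist x c ≤ ε) :
    nearestPts Q (x + t • v) = {x} := by
  refine nearestPts_eq_singleton_of_isUniqueNearestPt (h.add_smul_of_le ht hts) ?_
  rwa [dist_self_add_left, norm_smul, Real.norm_of_nonneg ht, ← mul_assoc]

theorem IsCompact.nearestPts_nonempty {S : Set H} (hS : IsCompact S) (hne : S.Nonempty) (z : H) :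
    (nearestPts S z).Nonempty :=
  let ⟨x, hx, hmin⟩ := hS.exists_isMinOn hne (continuous_const.dist continuous_id).continuousOn
  ⟨x, hx, fun _ hy => hmin hy⟩

theorem tendsto_of_mem_nearestPts {S : Set H} {z₀ x₀ : H} (hS : IsCompact S)
    (hu : IsUniqueNearestPt S z₀ x₀) {p : H → H} (hp : ∀ z, p z ∈ nearestPts S z) :
    Tendsto p (𝓝 z₀) (𝓝 x₀) := by
  rw [Metric.tendsto_nhds]
  intro δ hδ
  -- the points of `S` at distance `≥ δ` from `x₀` are uniformly farther from `z₀` than `x₀` is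
  have hK : IsCompact (S ∩ {y | δ ≤ dist y x₀}) :=
    hS.inter_right (isClosed_le continuous_const (continuous_id.dist continuous_const))
  obtain ⟨a, ha, hfar⟩ := hK.exists_forall_le' (continuous_const.dist continuous_id).continuousOn
    (a := dist z₀ x₀) fun y hy => hu.2 y hy.1 fun hyx => by
      have hδy : δ ≤ dist y x₀ := hy.2
      rw [hyx, dist_self] at hδy
      linarith
  filter_upwards [ball_mem_nhds z₀ (half_pos (sub_pos.2 ha))] with z hz
  by_contra! hpz
  have h₁ : a ≤ dist z₀ (p z) := hfar (p z) ⟨(hp z).1, hpz⟩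
  have h₂ := (hp z).2 x₀ hu.1
  have h₃ := dist_triangle z₀ z (p z)
  have h₄ := dist_triangle z z₀ x₀
  rw [mem_ball] at hz
  linarith [dist_comm z z₀]

end NearestPoints

section NormalCones

variable {H : Type*} [NormedAddCommGroup H] [InnerProductSpace ℝ H]

theorem frechetNormalCone_subset_limitingNormalCone (Q : Set H) (x : H) :
    frechetNormalCone Q x ⊆ limitingNormalCone Q x := fun v hv =>
  ⟨fun _ => x, fun _ => v, fun _ => hv, tendsto_const_nhds, tendsto_const_nhds⟩

theorem LocallyClosedAt.mem_of_mem_limitingNormalCone {Q : Set H} {x v : H}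
    (hQ : LocallyClosedAt Q x) (hv : v ∈ limitingNormalCone Q x) : x ∈ Q := by
  obtain ⟨ε, hε, hcl⟩ := hQ
  obtain ⟨xs, vs, hvs, hxs, -⟩ := hv
  have hmem : ∀ᶠ i in atTop, xs i ∈ Q ∩ closedBall x ε := by
    filter_upwards [hxs.eventually_mem (closedBall_mem_nhds x hε)] with i hi
    exact ⟨(hvs i).1, hi⟩
  exact (hcl.mem_of_tendsto hxs hmem).1

theorem real_inner_sub_le_of_mem_nearestPts {Q : Set H} {z x y : H} (hx : x ∈ nearestPts Q z)
    (hy : y ∈ Q) : ⟪z - x, y - x⟫ ≤ ‖y - x‖ ^ 2 / 2 := by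
  have hle : ‖z - x‖ ≤ ‖z - y‖ := by simpa only [dist_eq_norm] using hx.2 y hy
  have hexp : ‖z - y‖ ^ 2 = ‖z - x‖ ^ 2 - 2 * ⟪z - x, y - x⟫ + ‖y - x‖ ^ 2 := by
    rw [← norm_sub_sq_real, sub_sub_sub_cancel_right]
  nlinarith [norm_nonneg (z - x)]

theorem smul_sub_mem_frechetNormalCone {Q : Set H} {z x : H} {t : ℝ}
    (hx : x ∈ nearestPts Q z) (ht : 0 < t) : t • (z - x) ∈ frechetNormalCone Q x := by
  refine ⟨hx.1, fun ε hε => ⟨2 * ε / t, by positivity, fun y hy hyx => ?_⟩⟩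
  rw [dist_eq_norm, lt_div_iff₀ ht] at hyx
  rw [real_inner_smul_left]
  have hprox := real_inner_sub_le_of_mem_nearestPts hx hy
  calc t * ⟪z - x, y - x⟫ ≤ t * (‖y - x‖ ^ 2 / 2) := by gcongr
    _ = (‖y - x‖ * t / 2) * ‖y - x‖ := by ring
    _ ≤ ε * ‖y - x‖ := by gcongr; linarith

theorem ProxRegularAt.exists_isClosed_inter_closedBall {Q : Set H} {xb vb : H}
    (h : ProxRegularAt Q xb vb) :
    ∃ ε > (0:ℝ), ∃ r > (0:ℝ), IsClosed (Q ∩ closedBall xb ε) ∧ ∀ x ∈ Q,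
      ∀ v ∈ limitingNormalCone Q x, dist x xb < ε → dist v vb < ε →
        IsUniqueNearestPt (Q ∩ closedBall xb ε) (x + r⁻¹ • v) x := by
  obtain ⟨⟨εc, hεc, hcl⟩, ε, hε, r, hr, hreg⟩ := h
  refine ⟨min ε εc, lt_min hε hεc, r, hr, ?_, fun x hx v hv hxd hvd => ?_⟩
  · rw [← inter_eq_right.2 (closedBall_subset_closedBall (min_le_right ε εc)), ← inter_assoc]
    exact hcl.inter isClosed_closedBall
  · exact (hreg x hx v hv (hxd.trans_le (min_le_left _ _)) (hvd.trans_le (min_le_left _ _))).mono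
      (inter_subset_inter_right _ (closedBall_subset_closedBall (min_le_left _ _)))
      ⟨hx, mem_closedBall.2 hxd.le⟩

def shiftedNormals (Q M : Set H) (xb vb : H) (lam eps : ℝ) : Set H :=
  {z | ∃ x ∈ M, ∃ v ∈ limitingNormalCone Q x, dist x xb < eps ∧ dist v vb < eps ∧ z = x + lam • v}

theorem identifiableIn_setOf_exists_dist_lt (Q : Set H) (xb vb : H) {eps : ℝ} (heps : 0 < eps) :
    IdentifiableIn Q {y | ∃ v ∈ limitingNormalCone Q y, dist v vb < eps} xb vb :=
  ⟨univ ×ˢ ball vb eps, prod_mem_nhds univ_mem (ball_mem_nhds vb heps),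
    fun p hp _ hpN => ⟨p.2, hpN, hp.2⟩⟩

theorem mem_interior_shiftedNormals {Q M : Set H} {xb vb : H} {lam eps ε : ℝ}
    (hS : IsCompact (Q ∩ closedBall xb ε))
    (hu : IsUniqueNearestPt (Q ∩ closedBall xb ε) (xb + lam • vb) xb)
    (hid : IdentifiableIn Q M xb vb) (hlam : 0 < lam) (heps : 0 < eps)
    (hsmall : 2 * lam * ‖vb‖ < ε) :
    xb + lam • vb ∈ interior (shiftedNormals Q M xb vb lam eps) := by
  obtain ⟨W, hW, hWM⟩ := hid
  choose p hp using hS.nearestPts_nonempty ⟨xb, hu.1⟩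
  have hpx : Tendsto p (𝓝 (xb + lam • vb)) (𝓝 xb) := tendsto_of_mem_nearestPts hS hu hp
  have hpv : Tendsto (fun z => lam⁻¹ • (z - p z)) (𝓝 (xb + lam • vb)) (𝓝 vb) := by
    simpa [smul_smul, inv_mul_cancel₀ hlam.ne'] using (tendsto_id.sub hpx).const_smul lam⁻¹
  have hloc : ∀ᶠ z in 𝓝 (xb + lam • vb), 2 * dist z (p z) + dist (p z) xb < ε := by
    refine Tendsto.eventually_lt_const ?_ (((tendsto_id.dist hpx).const_mul 2).add
      (hpx.dist tendsto_const_nhds))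
    rwa [dist_self, add_zero, dist_self_add_left, norm_smul, Real.norm_of_nonneg hlam.le,
      ← mul_assoc]
  rw [mem_interior_iff_mem_nhds]
  filter_upwards [hloc, (hpx.prodMk_nhds hpv).eventually_mem hW,
    hpx.eventually_mem (ball_mem_nhds xb heps), hpv.eventually_mem (ball_mem_nhds vb heps)]
    with z hzloc hzW hzx hzv
  have hpQ : p z ∈ nearestPts Q z :=
    mem_nearestPts_of_mem_nearestPts_inter_closedBall (hp z) hzloc.le
  have hN : lam⁻¹ • (z - p z) ∈ limitingNormalCone Q (p z) :=
    frechetNormalCone_subset_limitingNormalCone Q (p z)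
      (smul_sub_mem_frechetNormalCone hpQ (inv_pos.2 hlam))
  refine ⟨p z, hWM _ hzW hpQ.1 hN, _, hN, hzx, hzv, ?_⟩
  rw [smul_smul, mul_inv_cancel₀ hlam.ne', one_smul, add_sub_cancel]

theorem locallyEq_iUnion_nearestPts_shiftedNormals {Q M : Set H} {xb vb : H} {lam eps : ℝ}
    (hmin : LocallyMinimalIdentifiableIn Q M xb vb) (heps : 0 < eps)
    (hproj : ∀ x ∈ M, ∀ v ∈ limitingNormalCone Q x, dist x xb < eps → dist v vb < eps →
      nearestPts Q (x + lam • v) = {x}) :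
    LocallyEq M (⋃ y ∈ shiftedNormals Q M xb vb lam eps, nearestPts Q y) xb := by
  obtain ⟨V, hV, hMV⟩ := hmin.2 _ (identifiableIn_setOf_exists_dist_lt Q xb vb heps)
  refine ⟨V ∩ ball xb eps, inter_mem hV (ball_mem_nhds xb heps), ?_⟩
  ext x
  constructor
  · rintro ⟨hxM, hxV, hxb⟩
    obtain ⟨v, hv, hvb⟩ := (hMV ⟨hxM, hxV⟩).1
    refine ⟨mem_biUnion ⟨x, hxM, v, hv, hxb, hvb, rfl⟩ ?_, hxV, hxb⟩
    rw [hproj x hxM v hv hxb hvb]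
    rfl
  · rintro ⟨hxP, hxV, hxb⟩
    obtain ⟨_, ⟨m, hm, v, hv, hmb, hvb, rfl⟩, hx⟩ := mem_iUnion₂.1 hxP
    rw [hproj m hm v hv hmb hvb, mem_singleton_iff] at hx
    exact ⟨hx ▸ hm, hxV, hxb⟩

end NormalCones

/-- representing locally minimal identifiable sets as projections of
neighborhoods. -/
theorem statement14 {n : ℕ} (Q : Set (Euc n)) (xb vb : Euc n)
    (hvb : vb ∈ limitingNormalCone Q xb) (hprox : ProxRegularAt Q xb vb)
    (M : Set (Euc n)) (hMQ : M ⊆ Q)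
    (hmin : LocallyMinimalIdentifiableIn Q M xb vb) :
    ∃ lam0 > (0:ℝ), ∃ eps0 > (0:ℝ), ∀ lam, 0 < lam → lam < lam0 →
      ∀ eps, 0 < eps → eps < eps0 → ∀ U : Set (Euc n),
        U = {z | ∃ x ∈ M, ∃ v ∈ limitingNormalCone Q x,
              dist x xb < eps ∧ dist v vb < eps ∧ z = x + lam • v} →
        (xb + lam • vb ∈ interior U ∧ LocallyEq M (⋃ y ∈ U, nearestPts Q y) xb) := by
  have hxbQ : xb ∈ Q := hprox.1.mem_of_mem_limitingNormalCone hvb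
  obtain ⟨ε, hε, r, hr, hcl, hreg⟩ := hprox.exists_isClosed_inter_closedBall
  refine ⟨min r⁻¹ (ε / (4 * (‖vb‖ + ε))), by positivity, ε / 2, by positivity, ?_⟩
  rintro lam hlam hlam0 eps heps heps0 U rfl
  have hlam_r : lam ≤ r⁻¹ := (hlam0.trans_le (min_le_left _ _)).le
  have hlam_vb : 4 * lam * (‖vb‖ + ε) ≤ ε := by
    have := hlam0.trans_le (min_le_right _ _)
    rw [lt_div_iff₀ (by positivity)] at this
    linarith
  have hproj : ∀ x ∈ M, ∀ v ∈ limitingNormalCone Q x, dist x xb < eps → dist v vb < eps →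
      nearestPts Q (x + lam • v) = {x} := by
    intro x hxM v hv hxb hvb'
    refine nearestPts_add_smul_eq_singleton (hreg x (hMQ hxM) v hv (by linarith) (by linarith))
      hlam.le hlam_r ?_
    have hv_le : ‖v‖ ≤ ‖vb‖ + ε := by
      linarith [norm_le_norm_add_norm_sub' v vb, dist_eq_norm v vb]
    nlinarith
  have hu : IsUniqueNearestPt (Q ∩ closedBall xb ε) (xb + lam • vb) xb :=
    (hreg xb hxbQ vb hvb (by simpa using hε) (by simpa using hε)).add_smul_of_le hlam.le hlam_r
  have hS : IsCompact (Q ∩ closedBall xb ε) :=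
    (isCompact_closedBall xb ε).of_isClosed_subset hcl inter_subset_right
  have hsmall : 2 * lam * ‖vb‖ < ε := by nlinarith [norm_nonneg vb]
  exact ⟨mem_interior_shiftedNormals hS hu hmin.1 hlam heps hsmall,
    locallyEq_iUnion_nearestPts_shiftedNormals hmin heps hproj⟩
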